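/- For the alternating group A_n: if n ≥ 5 is odd then γ(A_n) ≤ ⌊(n+3)/3⌋, and if n ≥ 4 is even then γ(A_n) ≤ ⌊(n+4)/4⌋. -/

import Mathlib

/-!
For odd `n`, an even permutation without an invariant set of size between `1` and `n / 3` has
all its cycles longer than `n / 3`, hence at most two of them; being even, it is an `n`-cycle.
So the stabilisers of one set of each size `1, …, ⌊n / 3⌋` cover `A_n` together with one
subgroup containing an `n`-cycle: the affine group of `ℤ/p` when `n = p` is prime, and the
stabiliser of the partition of `ℤ/n` into residue classes modulo a proper divisor otherwise.

For even `n`, a permutation without an invariant set of odd size `< n / 2` either has only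
cycles of even length or consists of two cycles of length `n / 2`. In both cases it commutes
with a fixed-point-free involution, hence is conjugate into the centraliser of a fixed one,
and this centraliser joins the stabilisers of sets of sizes `1, 3, …, 2⌊n / 4⌋ - 1`.

The subgroup added to the stabilisers contains an odd permutation in both cases, so
conjugacy in `S_n` into it already gives conjugacy in `A_n`; the stabilisers need no such
argument since `A_n` is transitive on sets of each size.
-/

/-- The normal covering number γ(G): the smallest `k` such that there exist
proper subgroups `H 1, …, H k` of `G` whose conjugates cover `G`. -/
noncomputable def normalCoveringNumber (G : Type*) [Group G] : ℕ :=
  sInf {k : ℕ | ∃ H : Fin k → Subgroup G, (∀ i, H i ≠ ⊤) ∧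
    ∀ g : G, ∃ i, ∃ x : G, x * g * x⁻¹ ∈ H i}

open Equiv Equiv.Perm MulAction Finset
open scoped Pointwise

section NormalCovering

variable {G G' : Type*} [Group G] [Group G']

def IsNormalCovering {k : ℕ} (H : Fin k → Subgroup G) : Prop :=
  (∀ i, H i ≠ ⊤) ∧ ∀ g : G, ∃ i, ∃ x : G, x * g * x⁻¹ ∈ H i

theorem normalCoveringNumber_le {k : ℕ} {H : Fin k → Subgroup G} (hH : IsNormalCovering H) :
    normalCoveringNumber G ≤ k :=
  Nat.sInf_le ⟨H, hH⟩

theorem IsNormalCovering.map {k : ℕ} {H : Fin k → Subgroup G} (hH : IsNormalCovering H)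
    (e : G ≃* G') : IsNormalCovering fun i => (H i).map (e : G →* G') := by
  refine ⟨fun i htop => hH.1 i (Subgroup.map_injective (f := (e : G →* G')) e.injective ?_),
    fun g => ?_⟩
  · rw [Subgroup.map_equiv_top]
    exact htop
  · obtain ⟨i, x, hx⟩ := hH.2 (e.symm g)
    exact ⟨i, e x, Subgroup.mem_map.mpr ⟨_, hx, by simp⟩⟩

theorem normalCoveringNumber_congr (e : G ≃* G') :
    normalCoveringNumber G = normalCoveringNumber G' :=
  congrArg sInf <| Set.ext fun _ =>
    ⟨fun ⟨_, hH⟩ => ⟨_, IsNormalCovering.map hH e⟩,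
      fun ⟨_, hH⟩ => ⟨_, IsNormalCovering.map hH e.symm⟩⟩

end NormalCovering

theorem exists_involutive_forall_ne {α : Type*} [Fintype α] (h : Even (Fintype.card α)) :
    ∃ τ : Perm α, Function.Involutive τ ∧ ∀ x, τ x ≠ x := by
  refine ⟨(Fintype.equivFin α).symm.permCongr Fin.revPerm, fun x => by simp, fun x hx => ?_⟩
  rw [permCongr_apply, Equiv.symm_symm, Equiv.symm_apply_eq] at hx
  have := congrArg Fin.val hx
  rw [Fin.revPerm_apply, Fin.val_rev] at this
  obtain ⟨k, hk⟩ := h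
  have := ((Fintype.equivFin α) x).isLt
  omega

section Involutions

variable {α : Type*} [DecidableEq α]

theorem swap_mem_centralizer {τ : Perm α} (hτ : Function.Involutive τ) (a : α) :
    swap a (τ a) ∈ Subgroup.centralizer {τ} := by
  rw [Subgroup.mem_centralizer_singleton_iff, eq_comm, ← mul_inv_eq_iff_eq_mul,
    ← swap_apply_apply, hτ a, swap_comm]

theorem exists_involutive_commute_of_swap_compl {σ π : Perm α} {S : Finset α}
    (hπ : ∀ x, π x ∈ S ↔ x ∉ S) (hσ : ∀ x, σ x ∈ S ↔ x ∈ S)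
    (hcomm : ∀ x ∈ S, π (σ x) = σ (π x)) :
    ∃ τ : Perm α, Function.Involutive τ ∧ (∀ x, τ x ≠ x) ∧ Commute σ τ := by
  have hπsymm : ∀ x, π.symm x ∈ S ↔ x ∉ S := fun x => by
    simpa using (hπ (π.symm x)).not.symm
  set f : α → α := fun x => if x ∈ S then π x else π.symm x with hf
  have hinv : Function.Involutive f := fun x => by
    by_cases hx : x ∈ S
    · simp [hf, hx, (hπ x).not.mpr (not_not.mpr hx)]
    · simp [hf, hx, (hπsymm x).mpr hx]
  refine ⟨hinv.toPerm f, hinv, fun x hfx => ?_, ?_⟩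
  · by_cases hx : x ∈ S
    · have := (hπ x).mp
      simp_all
    · have := (hπsymm x).mpr hx
      simp_all
  · ext x
    simp only [Perm.mul_apply, Function.Involutive.coe_toPerm, hf, hσ]
    by_cases hx : x ∈ S
    · simp [hx, hcomm x hx]
    · have := hcomm _ ((hπsymm x).mpr hx)
      simp only [Equiv.apply_symm_apply] at this
      simp [hx, Equiv.eq_symm_apply, this]

variable [Fintype α]

theorem sum_cycleType_of_forall_ne {σ : Perm α} (hfix : ∀ x, σ x ≠ x) :
    σ.cycleType.sum = Fintype.card α := by
  rw [sum_cycleType, eq_univ_of_forall fun x => mem_support.mpr (hfix x), card_univ]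

theorem cycleType_eq_replicate_of_involutive {τ : Perm α} (hτ : Function.Involutive τ)
    (hfix : ∀ x, τ x ≠ x) : τ.cycleType = Multiset.replicate (Fintype.card α / 2) 2 := by
  have hsq : τ ^ 2 = 1 := Equiv.ext hτ
  have htwo : ∀ a ∈ τ.cycleType, a = 2 := fun a ha =>
    (Nat.le_of_dvd two_pos
      ((dvd_of_mem_cycleType ha).trans (orderOf_dvd_of_pow_eq_one hsq))).antisymm
      (two_le_of_mem_cycleType ha)
  have hsum := sum_cycleType_of_forall_ne hfix
  rw [Multiset.eq_replicate_of_mem htwo] at hsum ⊢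
  rw [Multiset.sum_replicate, smul_eq_mul] at hsum
  congr 1
  omega

theorem exists_conj_mem_centralizer {τ₀ τ σ : Perm α} (hτ₀ : Function.Involutive τ₀)
    (hτ₀fix : ∀ x, τ₀ x ≠ x) (hτ : Function.Involutive τ) (hτfix : ∀ x, τ x ≠ x)
    (hcomm : Commute σ τ) :
    ∃ y : Perm α, y * σ * y⁻¹ ∈ Subgroup.centralizer {τ₀} := by
  obtain ⟨y, rfl⟩ := isConj_iff.mp <| isConj_of_cycleType_eq <|
    (cycleType_eq_replicate_of_involutive hτ hτfix).trans
      (cycleType_eq_replicate_of_involutive hτ₀ hτ₀fix).symm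
  exact ⟨y, Subgroup.mem_centralizer_singleton_iff.mpr ((Commute.conj_iff y).mpr hcomm)⟩

theorem exists_involutive_commute_of_forall_even {σ : Perm α} (hfix : ∀ x, σ x ≠ x)
    (heven : ∀ a ∈ σ.cycleType, Even a) :
    ∃ τ : Perm α, Function.Involutive τ ∧ (∀ x, τ x ≠ x) ∧ Commute σ τ := by
  set k : α → ℕ := fun x => #(σ.cycleOf x).support with hk
  have hk_pow : ∀ x m, k ((σ ^ m) x) = k x := fun x m => by
    simp only [hk, cycleOf_self_apply_pow]
  have hk_even : ∀ x, Even (k x) := fun x => heven _ <| by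
    rw [cycleType_def, Multiset.mem_map]
    exact ⟨σ.cycleOf x, cycleOf_mem_cycleFactorsFinset_iff.mpr (mem_support.mpr (hfix x)), rfl⟩
  have hk_two : ∀ x, 2 ≤ k x := fun x => (isCycle_cycleOf σ (hfix x)).two_le_card_support
  have hpow : ∀ x m, (σ ^ m) x = x ↔ k x ∣ m := fun x m =>
    (isCycleOn_support_cycleOf σ x).pow_apply_eq
      (mem_support_cycleOf_iff.mpr ⟨SameCycle.refl _ _, mem_support.mpr (hfix x)⟩)
  set f : α → α := fun x => (σ ^ (k x / 2)) x with hf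
  have hinv : Function.Involutive f := fun x => by
    simp only [hf, hk_pow]
    rw [← mul_apply, ← pow_add, hpow]
    obtain ⟨m, hm⟩ := hk_even x
    exact ⟨1, by omega⟩
  refine ⟨hinv.toPerm f, hinv, fun x hx => ?_, ?_⟩
  · have := hk_two x
    have := Nat.le_of_dvd (by omega) ((hpow x _).mp hx)
    omega
  · ext x
    have hkσ := hk_pow x 1
    rw [pow_one] at hkσ
    simp only [Perm.mul_apply, Function.Involutive.coe_toPerm, hf, hkσ]
    rw [← mul_apply, ← mul_apply, pow_mul_comm']

theorem exists_involutive_commute_of_cycleType_eq_pair {σ : Perm α} {q : ℕ}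
    (hfix : ∀ x, σ x ≠ x) (hσ : σ.cycleType = {q, q}) :
    ∃ τ : Perm α, Function.Involutive τ ∧ (∀ x, τ x ≠ x) ∧ Commute σ τ := by
  obtain ⟨c₁, c₂, hne, hcf⟩ := card_eq_two.mp <| by
    simpa [cycleType_def] using congrArg Multiset.card hσ
  have hmem₁ : c₁ ∈ σ.cycleFactorsFinset := by simp [hcf]
  have hmem₂ : c₂ ∈ σ.cycleFactorsFinset := by simp [hcf]
  have hcard : ∀ c ∈ σ.cycleFactorsFinset, #c.support = q := fun c hc => by
    have : #c.support ∈ σ.cycleType := cycleType_def σ ▸ Multiset.mem_map_of_mem _ hc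
    simpa [hσ] using this
  have hσ₁ := (mem_cycleFactorsFinset_iff.mp hmem₁).2
  have hσ₂ := (mem_cycleFactorsFinset_iff.mp hmem₂).2
  have hcompl : ∀ x, x ∈ c₁.support ↔ x ∉ c₂.support := fun x => by
    refine ⟨fun h₁ h₂ => disjoint_left.mp
      (cycleFactorsFinset_pairwise_disjoint σ hmem₁ hmem₂ hne).disjoint_support h₁ h₂,
      fun h₂ => ?_⟩
    have hx : x ∈ (σ.cycleOf x).support :=
      mem_support_cycleOf_iff.mpr ⟨.refl _ _, mem_support.mpr (hfix x)⟩
    have := cycleOf_mem_cycleFactorsFinset_iff.mpr (mem_support.mpr (hfix x))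
    rw [hcf, mem_insert, mem_singleton] at this
    rcases this with h | h <;> rw [h] at hx
    exacts [hx, absurd hx h₂]
  obtain ⟨π, hπ⟩ := isConj_iff.mp <| (mem_cycleFactorsFinset_iff.mp hmem₁).1.isConj
    (mem_cycleFactorsFinset_iff.mp hmem₂).1 ((hcard c₁ hmem₁).trans (hcard c₂ hmem₂).symm)
  have hπc : ∀ x, π (c₁ x) = c₂ (π x) := fun x => by simp [← hπ]
  have hπ₂ : ∀ x, π x ∈ c₂.support ↔ x ∈ c₁.support := fun x => by
    simp only [mem_support, ← hπc, ne_eq, EmbeddingLike.apply_eq_iff_eq]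
  refine exists_involutive_commute_of_swap_compl (S := c₁.support) (π := π)
    (fun x => ?_) (mem_cycleFactorsFinset_support hmem₁) (fun x hx => ?_)
  · rw [hcompl, hπ₂]
  · rw [← hσ₁ x hx, hπc, hσ₂ _ ((hπ₂ x).mpr hx)]

end Involutions

section Alternating

variable {α : Type*} [Fintype α] [DecidableEq α]

theorem mul_mem_alternatingGroup_of_notMem {x y : Perm α} (hx : x ∉ alternatingGroup α)
    (hy : y ∉ alternatingGroup α) : x * y ∈ alternatingGroup α := by
  rw [mem_alternatingGroup] at hx hy ⊢
  rw [map_mul, Int.units_ne_iff_eq_neg.mp hx, Int.units_ne_iff_eq_neg.mp hy]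
  rfl

theorem exists_conj_mem_subgroupOf {K : Subgroup (Perm α)} (hK : ¬ K ≤ alternatingGroup α)
    (g : alternatingGroup α) {y : Perm α} (hy : y * g * y⁻¹ ∈ K) :
    ∃ x : alternatingGroup α, x * g * x⁻¹ ∈ K.subgroupOf (alternatingGroup α) := by
  by_cases hy' : y ∈ alternatingGroup α
  · exact ⟨⟨y, hy'⟩, by simpa [Subgroup.mem_subgroupOf] using hy⟩
  obtain ⟨w, hwK, hw⟩ := SetLike.not_le_iff_exists.mp hK
  refine ⟨⟨w * y, mul_mem_alternatingGroup_of_notMem hw hy'⟩, ?_⟩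
  simpa [Subgroup.mem_subgroupOf, mul_assoc] using K.mul_mem (K.mul_mem hwK hy) (K.inv_mem hwK)

theorem exists_conj_mem_stabilizer_finset (h3 : 3 ≤ Fintype.card α) {g : alternatingGroup α}
    {s t : Finset α} (hs : g • s = s) (hst : #s = #t) :
    ∃ x : alternatingGroup α, x * g * x⁻¹ ∈ stabilizer (alternatingGroup α) t := by
  have := Set.powersetCard.isPretransitive_alternatingGroup (α := α) (n := #s)
    (by rwa [Nat.card_eq_fintype_card])
  obtain ⟨x, hx⟩ := exists_smul_eq (alternatingGroup α)
    (⟨s, rfl⟩ : Set.powersetCard α #s) ⟨t, hst.symm⟩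
  replace hx : x • s = t := congrArg Subtype.val hx
  refine ⟨x, ?_⟩
  rw [mem_stabilizer_iff, ← hx, mul_smul, mul_smul, inv_smul_smul, hs]

theorem stabilizer_finset_ne_top {t : Finset α} (ht : t.Nonempty) (htc : 1 < #tᶜ) :
    stabilizer (alternatingGroup α) t ≠ ⊤ := by
  rw [← stabilizer_coe_finset]
  refine alternatingGroup.stabilizer_ne_top ht ?_
  rw [← coe_compl]
  exact one_lt_card_iff_nontrivial.mp htc

theorem not_centralizer_le_alternatingGroup {τ : Perm α} (hτ : Function.Involutive τ) {a : α}
    (ha : τ a ≠ a) : ¬ Subgroup.centralizer {τ} ≤ alternatingGroup α := fun h => by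
  simpa [mem_alternatingGroup, sign_swap ha.symm] using h (swap_mem_centralizer hτ a)

theorem not_alternatingGroup_le_centralizer {τ : Perm α} (hτ : Function.Involutive τ)
    {a c : α} (ha : τ a ≠ a) (hca : c ≠ a) (hcτ : c ≠ τ a) :
    ¬ alternatingGroup α ≤ Subgroup.centralizer {τ} := by
  intro h
  have hg : swap (τ a) c * swap a c ∈ alternatingGroup α := by
    simp [mem_alternatingGroup, sign_swap hca.symm, sign_swap hcτ.symm]
  have := congrArg (· a) (Subgroup.mem_centralizer_singleton_iff.mp (h hg))
  exact hca (by simpa [swap_apply_of_ne_of_ne ha hcτ.symm, hτ a] using this)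

theorem normalCoveringNumber_alternatingGroup_le (h3 : 3 ≤ Fintype.card α)
    {K : Subgroup (Perm α)} (hK : ¬ K ≤ alternatingGroup α)
    (hAK : ¬ alternatingGroup α ≤ K) {m : ℕ} (size : Fin m → ℕ)
    (hsize : ∀ j, 0 < size j ∧ size j + 2 ≤ Fintype.card α)
    (hcover : ∀ g ∈ alternatingGroup α, (∃ y : Perm α, y * g * y⁻¹ ∈ K) ∨
      ∃ s : Finset α, g ∈ stabilizer (Perm α) s ∧ ∃ j, #s = size j) :
    normalCoveringNumber (alternatingGroup α) ≤ m + 1 := by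
  choose t _ ht using fun j => exists_subset_card_eq (s := (univ : Finset α))
    (n := size j) (by simpa using (hsize j).2.trans' (Nat.le_add_right _ 2))
  refine normalCoveringNumber_le (H := Fin.cons (K.subgroupOf (alternatingGroup α))
    fun j => stabilizer (alternatingGroup α) (t j)) ⟨fun i => ?_, fun g => ?_⟩
  · induction i using Fin.cases with
    | zero => simpa [Subgroup.subgroupOf_eq_top] using hAK
    | succ j =>
      have := hsize j
      refine stabilizer_finset_ne_top (card_pos.mp (by simpa [ht j] using this.1)) ?_
      rw [card_compl, ht j]
      omega
  · rcases hcover g g.2 with ⟨y, hy⟩ | ⟨s, hs, j, hsj⟩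
    · obtain ⟨x, hx⟩ := exists_conj_mem_subgroupOf hK g hy
      exact ⟨0, x, hx⟩
    · obtain ⟨x, hx⟩ := exists_conj_mem_stabilizer_finset h3 (mem_stabilizer_iff.mp hs)
        (hsj.trans (ht j).symm)
      exact ⟨j.succ, x, hx⟩

theorem exists_mem_stabilizer_card_eq_of_mem_cycleType {σ : Perm α} {a : ℕ}
    (ha : a ∈ σ.cycleType) : ∃ s : Finset α, σ ∈ stabilizer (Perm α) s ∧ #s = a := by
  rw [cycleType_def, Multiset.mem_map] at ha
  obtain ⟨c, hc, rfl⟩ := ha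
  exact ⟨c.support, mem_stabilizer_finset.mpr (mem_cycleFactorsFinset_support hc), rfl⟩

theorem exists_small_mem_stabilizer_or_cycleType_eq {σ : Perm α}
    (hσ : σ ∈ alternatingGroup α) (h3 : 3 ≤ Fintype.card α) (hodd : Odd (Fintype.card α)) :
    (∃ s : Finset α, σ ∈ stabilizer (Perm α) s ∧ 0 < #s ∧ 3 * #s ≤ Fintype.card α) ∨
      σ.cycleType = {Fintype.card α} := by
  by_cases hfix : ∃ x, σ x = x
  · obtain ⟨x, hx⟩ := hfix
    exact Or.inl ⟨{x}, by simpa using hx, by simp, by simpa⟩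
  push Not at hfix
  by_cases hsmall : ∃ a ∈ σ.cycleType, 3 * a ≤ Fintype.card α
  · obtain ⟨a, ha, ha3⟩ := hsmall
    obtain ⟨s, hs, rfl⟩ := exists_mem_stabilizer_card_eq_of_mem_cycleType ha
    exact Or.inl ⟨s, hs, (two_le_of_mem_cycleType ha).trans_lt' two_pos, ha3⟩
  push Not at hsmall
  right
  have hsum := sum_cycleType_of_forall_ne hfix
  have hcard : Multiset.card σ.cycleType < 3 := by
    by_contra! h
    have := Multiset.card_nsmul_le_sum (a := Fintype.card α / 3 + 1)
      (fun a ha => by have := hsmall a ha; omega)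
    rw [smul_eq_mul, hsum] at this
    have := Nat.mul_le_mul_right (Fintype.card α / 3 + 1) h
    omega
  have hpar : Even (σ.cycleType.sum + Multiset.card σ.cycleType) := by
    rw [← neg_one_pow_eq_one_iff_even (by decide : (-1 : ℤˣ) ≠ 1), ← sign_of_cycleType]
    exact hσ
  obtain ⟨a, ha⟩ := (Multiset.card_eq_one (s := σ.cycleType)).mp <| by
    rw [hsum] at hpar
    obtain ⟨k, hk⟩ := hodd
    obtain ⟨m, hm⟩ := hpar
    omega
  rw [ha, Multiset.sum_singleton] at hsum
  rw [ha, hsum]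

theorem exists_odd_mem_stabilizer_or_exists_involutive_commute (σ : Perm α)
    (h3 : 3 ≤ Fintype.card α) (heven : Even (Fintype.card α)) :
    (∃ s : Finset α, σ ∈ stabilizer (Perm α) s ∧ Odd #s ∧ 2 * #s < Fintype.card α) ∨
      ∃ τ : Perm α, Function.Involutive τ ∧ (∀ x, τ x ≠ x) ∧ Commute σ τ := by
  by_cases hfix : ∃ x, σ x = x
  · obtain ⟨x, hx⟩ := hfix
    exact Or.inl ⟨{x}, by simpa using hx, by simp, by simp; omega⟩
  push Not at hfix
  by_cases hsmall : ∃ a ∈ σ.cycleType, Odd a ∧ 2 * a < Fintype.card α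
  · obtain ⟨a, ha, ha_odd, ha2⟩ := hsmall
    obtain ⟨s, hs, rfl⟩ := exists_mem_stabilizer_card_eq_of_mem_cycleType ha
    exact Or.inl ⟨s, hs, ha_odd, ha2⟩
  push Not at hsmall
  right
  by_cases hall : ∀ a ∈ σ.cycleType, Even a
  · exact exists_involutive_commute_of_forall_even hfix hall
  push Not at hall
  obtain ⟨a, ha, ha_odd⟩ := hall
  rw [Nat.not_even_iff_odd] at ha_odd
  obtain ⟨t, ht⟩ := Multiset.exists_cons_of_mem ha
  have hsum := sum_cycleType_of_forall_ne hfix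
  -- As `card α` is even there is a second odd cycle, and two cycles of length
  -- `≥ card α / 2` exhaust `α`.
  obtain ⟨b, hb, hb_odd⟩ : ∃ b ∈ t, Odd b := by
    by_contra! h
    have ht_even : Even t.sum := Multiset.sum_induction Even t (fun _ _ => Even.add) ⟨0, rfl⟩
      fun b hb => Nat.not_odd_iff_even.mp (h b hb)
    rw [ht, Multiset.sum_cons] at hsum
    rw [← hsum, Nat.even_add] at heven
    exact Nat.not_even_iff_odd.mpr ha_odd (heven.mpr ht_even)
  obtain ⟨u, hu⟩ := Multiset.exists_cons_of_mem hb
  have ha2 := hsmall a ha ha_odd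
  have hb2 := hsmall b (ht ▸ Multiset.mem_cons_of_mem hb) hb_odd
  rw [ht, hu, Multiset.sum_cons, Multiset.sum_cons] at hsum
  have hu0 : u = 0 := Multiset.eq_zero_of_forall_notMem fun c hc => by
    have hcσ : c ∈ σ.cycleType := by simp [ht, hu, hc]
    have := two_le_of_mem_cycleType hcσ
    have := Multiset.le_sum_of_mem hc
    omega
  obtain rfl : b = a := by omega
  exact exists_involutive_commute_of_cycleType_eq_pair hfix (by rw [ht, hu, hu0]; rfl)

theorem normalCoveringNumber_alternatingGroup_le_of_odd (h3 : 3 ≤ Fintype.card α)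
    (hodd : Odd (Fintype.card α)) {K : Subgroup (Perm α)} {c : Perm α} (hc : c ∈ K)
    (hct : c.cycleType = {Fintype.card α}) (hK : ¬ K ≤ alternatingGroup α)
    (hAK : ¬ alternatingGroup α ≤ K) :
    normalCoveringNumber (alternatingGroup α) ≤ Fintype.card α / 3 + 1 := by
  refine normalCoveringNumber_alternatingGroup_le h3 hK hAK
    (fun j : Fin (Fintype.card α / 3) => j + 1) (fun j => ⟨j.succ_pos, by omega⟩)
    fun g hg => ?_
  rcases exists_small_mem_stabilizer_or_cycleType_eq hg h3 hodd with ⟨s, hs, hs0, hs3⟩ | hg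
  · exact Or.inr ⟨s, hs, ⟨#s - 1, by omega⟩, by simp; omega⟩
  · obtain ⟨y, rfl⟩ := isConj_iff.mp (isConj_of_cycleType_eq (hct.trans hg.symm))
    exact Or.inl ⟨y⁻¹, by simpa [mul_assoc] using hc⟩

theorem normalCoveringNumber_alternatingGroup_le_of_even (h4 : 4 ≤ Fintype.card α)
    (heven : Even (Fintype.card α)) :
    normalCoveringNumber (alternatingGroup α) ≤ Fintype.card α / 4 + 1 := by
  obtain ⟨τ₀, hτ₀, hτ₀fix⟩ := exists_involutive_forall_ne heven
  obtain ⟨a⟩ : Nonempty α := Fintype.card_pos_iff.mp (by omega)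
  obtain ⟨c, -, hc⟩ := exists_mem_notMem_of_card_lt_card (s := {a, τ₀ a}) (t := univ)
    (card_le_two.trans_lt (by rw [card_univ]; omega : 2 < #(univ : Finset α)))
  simp only [mem_insert, mem_singleton, not_or] at hc
  refine normalCoveringNumber_alternatingGroup_le (by omega)
    (not_centralizer_le_alternatingGroup hτ₀ (hτ₀fix a))
    (not_alternatingGroup_le_centralizer hτ₀ (hτ₀fix a) hc.1 hc.2)
    (fun j : Fin (Fintype.card α / 4) => 2 * j + 1) (fun j => ⟨by omega, by omega⟩)
    fun g _ => ?_
  rcases exists_odd_mem_stabilizer_or_exists_involutive_commute g (by omega) heven with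
    ⟨s, hs, ⟨k, hk⟩, hs2⟩ | ⟨τ, hτ, hτfix, hcomm⟩
  · have := Nat.even_iff.mp heven
    exact Or.inr ⟨s, hs, ⟨k, by omega⟩, by simp [hk]⟩
  · exact Or.inl (exists_conj_mem_centralizer hτ₀ hτ₀fix hτ hτfix hcomm)

end Alternating

def affinePerms (F : Type*) [Field F] : Subgroup (Perm F) where
  carrier := {f | ∃ a b : F, a ≠ 0 ∧ ∀ x, f x = a * x + b}
  one_mem' := ⟨1, 0, one_ne_zero, fun x => by simp⟩
  mul_mem' := by
    rintro f g ⟨a, b, ha, hf⟩ ⟨c, d, hc, hg⟩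
    exact ⟨a * c, a * d + b, mul_ne_zero ha hc, fun x => by rw [Perm.mul_apply, hg, hf]; ring⟩
  inv_mem' := by
    rintro f ⟨a, b, ha, hf⟩
    refine ⟨a⁻¹, -(a⁻¹ * b), inv_ne_zero ha, fun x => ?_⟩
    rw [Perm.inv_eq_iff_eq, hf]
    field_simp
    ring

section Affine

variable {F : Type*} [Field F]

theorem addLeft_mem_affinePerms (b : F) : Equiv.addLeft b ∈ affinePerms F :=
  ⟨1, b, one_ne_zero, fun x => by simp [add_comm]⟩

theorem isCycle_toPerm_of_forall_mem_zpowers {u : Fˣ} (hu : ∀ v, v ∈ Subgroup.zpowers u)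
    (hu1 : u ≠ 1) : (MulAction.toPerm u : Perm F).IsCycle := by
  refine ⟨1, by simpa [Units.smul_def] using hu1, fun y hy => ?_⟩
  have hy0 : y ≠ 0 := by
    rintro rfl
    simp at hy
  obtain ⟨k, hk⟩ := Subgroup.mem_zpowers_iff.mp (hu (Units.mk0 y hy0))
  refine ⟨k, ?_⟩
  rw [← MulAction.toPermHom_apply, ← map_zpow, hk]
  simp

variable [Fintype F] [DecidableEq F]

theorem not_alternatingGroup_le_affinePerms (h2 : (2 : F) ≠ 0) (h3 : (3 : F) ≠ 0) :
    ¬ alternatingGroup F ≤ affinePerms F := by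
  intro h
  have h1 : (1 : F) ≠ 2 := fun h12 => one_ne_zero (α := F) (by linear_combination -h12)
  have hg : swap (1 : F) 2 * swap 0 2 ∈ alternatingGroup F := by
    simp [mem_alternatingGroup, sign_swap h1, sign_swap h2.symm]
  obtain ⟨a, b, -, hab⟩ := h hg
  have e0 : 1 = b := by simpa using hab 0
  have e1 : 2 = a + b := by simpa [swap_apply_of_ne_of_ne, h1] using hab 1
  have e2 : 0 = a * 2 + b := by simpa [swap_apply_of_ne_of_ne, h1, h2.symm] using hab 2
  exact h3 (by linear_combination -e0 + 2 * e1 - e2)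

theorem not_affinePerms_le_alternatingGroup (hF : ringChar F ≠ 2) :
    ¬ affinePerms F ≤ alternatingGroup F := by
  obtain ⟨u, hu⟩ := IsCyclic.exists_generator (α := Fˣ)
  have hu1 : u ≠ 1 := by
    rintro rfl
    obtain ⟨_, h⟩ := Subgroup.mem_zpowers_iff.mp (hu (-1))
    rw [one_zpow] at h
    exact Ring.neg_one_ne_one_of_char_ne_two hF (by simpa using congrArg Units.val h.symm)
  have hsupp : (MulAction.toPerm u : Perm F).support = {0}ᶜ := by
    ext x
    simp [mem_support, Units.smul_def, mul_left_eq_self₀, hu1]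
  intro hle
  have := hle (show MulAction.toPerm u ∈ affinePerms F from
    ⟨u, 0, u.ne_zero, fun x => by simp [Units.smul_def]⟩)
  rw [mem_alternatingGroup, (isCycle_toPerm_of_forall_mem_zpowers hu hu1).sign, hsupp,
    card_compl, card_singleton] at this
  have hodd := FiniteField.odd_card_of_char_ne_two hF
  rw [Even.neg_one_pow ⟨Fintype.card F / 2, by omega⟩] at this
  exact absurd this (by decide)

end Affine

section Fibers

variable {α β : Type*} [DecidableEq α]

def fiberPerms (f : α → β) : Subgroup (Perm α) where
  carrier := {g | ∀ x y, f (g x) = f (g y) ↔ f x = f y}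
  one_mem' _ _ := Iff.rfl
  mul_mem' hg hh x y := (hg _ _).trans (hh x y)
  inv_mem' {g} hg x y := by simpa using (hg (g⁻¹ x) (g⁻¹ y)).symm

theorem swap_mem_fiberPerms {f : α → β} {a b : α} (h : f a = f b) :
    swap a b ∈ fiberPerms f := by
  have key : ∀ x, f (swap a b x) = f x := fun x => by
    rw [swap_apply_def]
    split_ifs <;> simp_all
  intro x y
  rw [key, key]

theorem not_alternatingGroup_le_fiberPerms [Fintype α] {f : α → β} {a b c : α} (hab : a ≠ b)
    (h : f a = f b) (hc : f c ≠ f a) : ¬ alternatingGroup α ≤ fiberPerms f := by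
  have hac : a ≠ c := fun h' => hc (h' ▸ rfl)
  have hbc : b ≠ c := fun h' => hc (h' ▸ h.symm)
  intro hle
  have hg : swap b c * swap a c ∈ alternatingGroup α := by
    simp [mem_alternatingGroup, sign_swap hac, sign_swap hbc]
  have hfib : f b = f c ↔ f a = f b := by
    simpa [swap_apply_of_ne_of_ne hab.symm hbc] using hle hg a b
  exact hc ((hfib.mpr h).symm.trans h.symm)

end Fibers

section ZMod

theorem natCast_zmod_ne_zero {n k : ℕ} (hk : 0 < k) (hkn : k < n) : (k : ZMod n) ≠ 0 := by
  rw [Ne, ZMod.natCast_eq_zero_iff]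
  exact fun h => absurd (Nat.le_of_dvd hk h) (by omega)

theorem cycleType_addLeft_one {n : ℕ} [NeZero n] (hn : 2 ≤ n) :
    (Equiv.addLeft (1 : ZMod n)).cycleType = {n} := by
  obtain ⟨k, rfl⟩ := Nat.exists_eq_add_of_le' hn
  have : (Equiv.addLeft (1 : ZMod (k + 2)) : Perm (ZMod (k + 2))) = finRotate (k + 2) :=
    Equiv.ext fun x => (add_comm _ _).trans (finRotate_apply (n := k + 2) x).symm
  rw [this]
  exact cycleType_finRotate

theorem exists_addLeft_one_mem_of_odd {n : ℕ} [NeZero n] (h5 : 5 ≤ n) (hodd : Odd n) :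
    ∃ K : Subgroup (Perm (ZMod n)), Equiv.addLeft 1 ∈ K ∧
      ¬ K ≤ alternatingGroup (ZMod n) ∧ ¬ alternatingGroup (ZMod n) ≤ K := by
  by_cases hp : n.Prime
  · have := Fact.mk hp
    refine ⟨affinePerms (ZMod n), addLeft_mem_affinePerms 1,
      not_affinePerms_le_alternatingGroup ?_, not_alternatingGroup_le_affinePerms ?_ ?_⟩
    · rw [ZMod.ringChar_zmod_n]
      rintro rfl
      exact absurd hodd (by decide)
    · exact_mod_cast natCast_zmod_ne_zero (n := n) (k := 2) (by norm_num) (by omega)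
    · exact_mod_cast natCast_zmod_ne_zero (n := n) (k := 3) (by norm_num) (by omega)
  · obtain ⟨d, ⟨e, rfl⟩, hd, hdn⟩ := Nat.exists_dvd_of_not_prime2 (by omega) hp
    have he : 1 < e := by
      by_contra!
      interval_cases e <;> omega
    have hd0 : (d : ZMod (d * e)) ≠ 0 := natCast_zmod_ne_zero (by omega) hdn
    have he0 : (e : ZMod (d * e)) ≠ 0 :=
      natCast_zmod_ne_zero (by omega) (lt_mul_left (by omega) (by omega))
    have hde : (d : ZMod (d * e)) * e = 0 := by rw [← Nat.cast_mul, ZMod.natCast_self]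
    -- The fibres of `x ↦ d * x` are the residue classes modulo `e`.
    refine ⟨fiberPerms ((d : ZMod (d * e)) * ·), fun x y => by simp [mul_add], fun hle => ?_,
      not_alternatingGroup_le_fiberPerms (a := 0) (b := e) (c := 1) he0.symm (by simp [hde])
        (by simpa using hd0)⟩
    have := hle (swap_mem_fiberPerms (f := ((d : ZMod (d * e)) * ·)) (a := 0) (b := e)
      (by simp [hde]))
    simp [mem_alternatingGroup, sign_swap he0.symm] at this

end ZMod

theorem gamma_alt_upper (n : ℕ) :
    (5 ≤ n → Odd n → normalCoveringNumber (alternatingGroup (Fin n)) ≤ (n + 3) / 3) ∧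
    (4 ≤ n → Even n → normalCoveringNumber (alternatingGroup (Fin n)) ≤ (n + 4) / 4) := by
  refine ⟨fun h5 hodd => ?_, fun h4 heven => ?_⟩
  · have : NeZero n := ⟨by omega⟩
    obtain ⟨K, hK1, hK, hAK⟩ := exists_addLeft_one_mem_of_odd h5 hodd
    have hbound := normalCoveringNumber_alternatingGroup_le_of_odd (α := ZMod n)
      (by rw [ZMod.card]; omega) (by rwa [ZMod.card]) hK1
      (by rw [ZMod.card]; exact cycleType_addLeft_one (by omega)) hK hAK
    rw [ZMod.card] at hbound
    rw [normalCoveringNumber_congr (ZMod.finEquiv n).toEquiv.altCongrHom]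
    omega
  · have hbound := normalCoveringNumber_alternatingGroup_le_of_even (α := Fin n)
      (by rwa [Fintype.card_fin]) (by rwa [Fintype.card_fin])
    rw [Fintype.card_fin] at hbound
    omega
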